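/- Let A ∈ ℝ^{m×m}, B ∈ ℝ^{m×1}, C ∈ ℝ^{1×m}, ε > 0, M > 0. Suppose P is an m×m symmetric positive definite matrix and L ∈ ℝ^{p×m} satisfy PA + AᵀP = −LᵀL − (ε/2)P and PB = Cᵀ. Let n : ℝ × ℝ → ℝ be continuous and satisfy n(t, y)·y > −M for all t and y. Let x : [0, ∞) → ℝ^m be differentiable with x'(t) = A x(t) − B n(t, C x(t)) for all t ≥ 0, and let η > 0. If (1/2) x(t₀)ᵀ P x(t₀) ≤ 2M/ε + η for some t₀ ≥ 0, then (1/2) x(t)ᵀ P x(t) ≤ 2M/ε + η for all t ≥ t₀. -/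

import Mathlib

/-!
`V x = ½ xᵀPx` is a Lyapunov function. Along the flow, the KYP equations and `PB = Cᵀ` give
`V' = -½ |Lx|² - (ε/2) V - n(t, y) y < M - (ε/2) V`, so `V' < -εη/2 < 0` wherever `V = 2M/ε + η`,
and a differentiable function whose derivative is negative on a level `c` cannot cross `c`
upwards.
-/

open Matrix Set

section Calculus

variable {ι κ : Type*} [Fintype ι] {f g : ℝ → ι → ℝ} {f' g' : ι → ℝ} {t : ℝ}

theorem HasDerivAt.dotProduct (hf : HasDerivAt f f' t) (hg : HasDerivAt g g' t) :
    HasDerivAt (fun s => f s ⬝ᵥ g s) (f' ⬝ᵥ g t + f t ⬝ᵥ g') t :=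
  (HasDerivAt.fun_sum fun i _ => (hasDerivAt_pi.1 hf i).fun_mul (hasDerivAt_pi.1 hg i)).congr_deriv
    Finset.sum_add_distrib

theorem HasDerivAt.matrix_mulVec (A : Matrix κ ι ℝ) (hf : HasDerivAt f f' t) :
    HasDerivAt (fun s => A *ᵥ f s) (A *ᵥ f') t :=
  hasDerivAt_pi.2 fun k => HasDerivAt.fun_sum fun i _ => (hasDerivAt_pi.1 hf i).const_mul (A k i)

theorem Matrix.IsSymm.dotProduct_mulVec_comm {P : Matrix ι ι ℝ} (hP : P.IsSymm) (v w : ι → ℝ) :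
    v ⬝ᵥ P *ᵥ w = w ⬝ᵥ P *ᵥ v := by
  rw [← dotProduct_transpose_mulVec, hP.eq]

theorem HasDerivAt.dotProduct_mulVec_self {P : Matrix ι ι ℝ} (hP : P.IsSymm)
    (hf : HasDerivAt f f' t) :
    HasDerivAt (fun s => f s ⬝ᵥ P *ᵥ f s) (2 * (f t ⬝ᵥ P *ᵥ f')) t :=
  (hf.dotProduct (hf.matrix_mulVec P)).congr_deriv (by rw [hP.dotProduct_mulVec_comm]; ring)

end Calculus

theorem mapsTo_Ici_Iic_of_hasDerivAt {V V' : ℝ → ℝ} {a c : ℝ}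
    (hV : ∀ t ∈ Ici a, HasDerivAt V (V' t) t) (hV' : ∀ t ∈ Ici a, V t = c → V' t < 0)
    (ha : V a ≤ c) : MapsTo V (Ici a) (Iic c) := fun _ ht =>
  image_le_of_deriv_right_lt_deriv_boundary (B := fun _ => c) (B' := 0)
    (fun s hs => (hV s hs.1).continuousAt.continuousWithinAt)
    (fun s hs => (hV s hs.1).hasDerivWithinAt) ha (fun _ => hasDerivAt_const _ _)
    (fun s hs => hV' s hs.1) ⟨ht, le_rfl⟩

section Lure

variable {ι κ : Type*} [Fintype ι] [Fintype κ]

theorem Matrix.IsSymm.dotProduct_mul_add_transpose_mul_mulVec {P : Matrix ι ι ℝ} (hP : P.IsSymm)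
    (A : Matrix ι ι ℝ) (x : ι → ℝ) :
    x ⬝ᵥ (P * A + Aᵀ * P) *ᵥ x = 2 * (x ⬝ᵥ P *ᵥ (A *ᵥ x)) := by
  rw [add_mulVec, dotProduct_add, ← mulVec_mulVec, ← mulVec_mulVec, dotProduct_transpose_mulVec,
    dotProduct_comm (P *ᵥ x), hP.dotProduct_mulVec_comm (A *ᵥ x)]
  ring

theorem lure_dissipation {A P : Matrix ι ι ℝ} {L : Matrix κ ι ℝ} {B C : ι → ℝ} {ε M : ℝ}
    (hP : P.IsSymm) (hKYP1 : P * A + Aᵀ * P = -(Lᵀ * L) - (ε / 2) • P)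
    (hKYP2 : P *ᵥ B = C) {x : ι → ℝ} {u : ℝ} (hu : -M < u * (C ⬝ᵥ x)) :
    x ⬝ᵥ P *ᵥ (A *ᵥ x - u • B) < M - ε / 2 * (1 / 2 * (x ⬝ᵥ P *ᵥ x)) := by
  have hform := hP.dotProduct_mul_add_transpose_mul_mulVec A x
  rw [hKYP1, sub_mulVec, neg_mulVec, smul_mulVec, ← mulVec_mulVec, dotProduct_sub,
    dotProduct_neg, dotProduct_smul, dotProduct_transpose_mulVec, smul_eq_mul] at hform
  have hL : 0 ≤ L *ᵥ x ⬝ᵥ L *ᵥ x := by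
    simpa only [star_trivial] using dotProduct_self_star_nonneg (L *ᵥ x)
  rw [mulVec_sub, mulVec_smul, dotProduct_sub, dotProduct_smul, hKYP2, dotProduct_comm x C,
    smul_eq_mul]
  linarith

end Lure

theorem lure_positive_invariance_general {m p : ℕ}
    (A : Matrix (Fin m) (Fin m) ℝ) (B : Fin m → ℝ) (C : Fin m → ℝ)
    (ε M : ℝ) (hε : 0 < ε)
    (P : Matrix (Fin m) (Fin m) ℝ) (hP : P.PosDef)
    (L : Matrix (Fin p) (Fin m) ℝ)
    (hKYP1 : P * A + Aᵀ * P = -(Lᵀ * L) - (ε / 2) • P)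
    (hKYP2 : P.mulVec B = C)
    (n : ℝ → ℝ → ℝ)
    (hsector : ∀ t y, -M < n t y * y)
    (x : ℝ → Fin m → ℝ)
    (hx : ∀ t, 0 ≤ t → HasDerivAt x (A.mulVec (x t) - n t (C ⬝ᵥ x t) • B) t)
    (η : ℝ) (hη : 0 < η)
    (t₀ : ℝ) (ht₀ : 0 ≤ t₀)
    (hV₀ : (1 / 2) * (x t₀ ⬝ᵥ P.mulVec (x t₀)) ≤ 2 * M / ε + η) :
    ∀ t, t₀ ≤ t → (1 / 2) * (x t ⬝ᵥ P.mulVec (x t)) ≤ 2 * M / ε + η := by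
  have hPsymm : P.IsSymm := isHermitian_iff_isSymm.1 hP.isHermitian
  have hV : ∀ t ∈ Ici t₀, HasDerivAt (fun s => 1 / 2 * (x s ⬝ᵥ P *ᵥ x s))
      (x t ⬝ᵥ P *ᵥ (A *ᵥ x t - n t (C ⬝ᵥ x t) • B)) t := fun t ht =>
    (((hx t (ht₀.trans ht)).dotProduct_mulVec_self hPsymm).const_mul (1 / 2)).congr_deriv
      (by ring)
  have hlevel : ε / 2 * (2 * M / ε + η) = M + ε * η / 2 := by
    field_simp
  refine fun t ht => mapsTo_Ici_Iic_of_hasDerivAt hV (fun s _ hs => ?_) hV₀ ht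
  have hdiss := lure_dissipation hPsymm hKYP1 hKYP2 (hsector s (C ⬝ᵥ x s))
  rw [hs, hlevel] at hdiss
  linarith [mul_pos hε hη]

/-- Lemma 1 (positive invariance part) for a Lur'e system `x' = A x - B n(t, Cx)`
with strictly proper linear block: under the ε-KYP conditions
`PA + AᵀP = -LᵀL - (ε/2)P`, `PB = Cᵀ` and the bound `n(t,y)·y > -M`,
the region `{x : (1/2) xᵀPx ≤ 2M/ε + η}` is positively invariant along the
trajectory. -/
theorem lure_positive_invariance {m p : ℕ}
    (A : Matrix (Fin m) (Fin m) ℝ) (B : Fin m → ℝ) (C : Fin m → ℝ)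
    (ε M : ℝ) (hε : 0 < ε) (hM : 0 < M)
    (P : Matrix (Fin m) (Fin m) ℝ) (hP : P.PosDef)
    (L : Matrix (Fin p) (Fin m) ℝ)
    (hKYP1 : P * A + Aᵀ * P = -(Lᵀ * L) - (ε / 2) • P)
    (hKYP2 : P.mulVec B = C)
    (n : ℝ → ℝ → ℝ) (hn : Continuous fun q : ℝ × ℝ => n q.1 q.2)
    (hsector : ∀ t y, -M < n t y * y)
    (x : ℝ → Fin m → ℝ)
    (hx : ∀ t, 0 ≤ t → HasDerivAt x (A.mulVec (x t) - n t (C ⬝ᵥ x t) • B) t)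
    (η : ℝ) (hη : 0 < η)
    (t₀ : ℝ) (ht₀ : 0 ≤ t₀)
    (hV₀ : (1 / 2) * (x t₀ ⬝ᵥ P.mulVec (x t₀)) ≤ 2 * M / ε + η) :
    ∀ t, t₀ ≤ t → (1 / 2) * (x t ⬝ᵥ P.mulVec (x t)) ≤ 2 * M / ε + η :=
  lure_positive_invariance_general A B C ε M hε P hP L hKYP1 hKYP2 n hsector x hx η hη t₀ ht₀ hV₀
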